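/- arXiv:math/0606085 — 5 statements merged into one kernel-verified Lean document; each statement's English description precedes it below -/
import Mathlib

section
/- Let λ(n) be a sequence of partitions such that for each i the limits α_i = lim_n λ(n)_i / n and β_i = lim_n (λ(n))'_i / n exist and are finite, and δ = lim_n |λ(n)|/n exists and is finite. Then Σ_{i=1}^∞ (α_i + β_i) ≤ δ. -/
/-!
The first `N` rows and the first `N` columns of a Young diagram together cover each box at most
twice, and only the boxes of the `N × N` corner square twice, so
`Σ_{i<N} (λ_i + λ'_i) ≤ |λ| + N²`. Dividing by `n` and letting `n → ∞` with `N` fixed gives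
`Σ_{i<N} (α_i + β_i) ≤ δ`; the terms are nonnegative, so the series converges with sum at most `δ`.
-/

open Filter Finset

theorem sum_range_card_filter_add_one_le (f : ℕ → ℕ) (s : Finset ℕ) (N : ℕ) :
    ∑ i ∈ range N, #{k ∈ s | i + 1 ≤ f k} = ∑ k ∈ s, min (f k) N := by
  simp only [card_filter]
  rw [sum_comm]
  refine sum_congr rfl fun k _ => ?_
  rw [← card_filter, ← card_range (min (f k) N)]
  congr 1
  ext i
  simp only [mem_filter, mem_range, Nat.lt_min]
  omega

theorem sum_range_add_sum_min_le (f : ℕ → ℕ) (s : Finset ℕ) (hf : ∀ k ∉ s, f k = 0) (N : ℕ) :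
    ∑ i ∈ range N, f i + ∑ k ∈ s, min (f k) N ≤ ∑ k ∈ s, f k + N * N := by
  have hrows : ∑ i ∈ range N, f i = ∑ k ∈ s ∩ range N, f k :=
    (sum_subset inter_subset_right fun k hk hks =>
      hf k fun hs => hks (mem_inter.2 ⟨hs, hk⟩)).symm
  have hsquare : ∑ k ∈ s ∩ range N, min (f k) N ≤ N * N :=
    calc ∑ k ∈ s ∩ range N, min (f k) N ≤ #(s ∩ range N) • N :=
          sum_le_card_nsmul _ _ _ fun _ _ => min_le_right _ _
      _ ≤ N * N := by
          rw [smul_eq_mul]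
          exact Nat.mul_le_mul_right _ ((card_le_card inter_subset_right).trans (card_range N).le)
  have hrest : ∑ k ∈ s \ range N, min (f k) N ≤ ∑ k ∈ s \ range N, f k :=
    sum_le_sum fun _ _ => min_le_left _ _
  rw [← sum_inter_add_sum_sdiff s (range N) f,
    ← sum_inter_add_sum_sdiff s (range N) fun k => min (f k) N, hrows]
  omega

theorem sum_range_div_add_card_filter_div_le (f : ℕ → ℕ) (n : ℕ) (hf : ∀ k, n ≤ k → f k = 0)
    (N : ℕ) :
    ∑ i ∈ range N, ((f i : ℝ) / n + (#{k ∈ range n | i + 1 ≤ f k} : ℝ) / n)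
      ≤ (∑ k ∈ range n, (f k : ℝ)) / n + (N * N : ℝ) / n := by
  have hcount := sum_range_add_sum_min_le f (range n) (fun k hk => hf k (by simpa using hk)) N
  rw [← sum_range_card_filter_add_one_le] at hcount
  rw [sum_add_distrib, ← sum_div, ← sum_div, ← add_div, ← add_div]
  exact div_le_div_of_nonneg_right (by exact_mod_cast hcount) n.cast_nonneg

theorem stmt1_general (lam : ℕ → ℕ → ℕ)
    (hlen : ∀ n i, n ≤ i → lam n i = 0)
    (α β : ℕ → ℝ) (δ : ℝ)
    (hα : ∀ i, Tendsto (fun n => (lam n i : ℝ) / n) atTop (nhds (α i)))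
    (hβ : ∀ i, Tendsto
      (fun n => ((((Finset.range n).filter (fun k => i + 1 ≤ lam n k)).card : ℝ)) / n)
      atTop (nhds (β i)))
    (hδ : Tendsto (fun n => (∑ i ∈ Finset.range n, (lam n i : ℝ)) / n) atTop (nhds δ)) :
    Summable (fun i => α i + β i) ∧ ∑' i, (α i + β i) ≤ δ := by
  have hnonneg : ∀ i, 0 ≤ α i + β i := fun i =>
    add_nonneg (ge_of_tendsto' (hα i) fun _ => by positivity)
      (ge_of_tendsto' (hβ i) fun _ => by positivity)
  have hpartial : ∀ N, ∑ i ∈ range N, (α i + β i) ≤ δ := by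
    intro N
    have hlhs := tendsto_finsetSum (range N) fun i _ => (hα i).add (hβ i)
    have hrhs : Tendsto (fun n : ℕ => (∑ i ∈ range n, (lam n i : ℝ)) / n + (N * N : ℝ) / n)
        atTop (nhds (δ + 0)) :=
      hδ.add (tendsto_const_nhds.div_atTop tendsto_natCast_atTop_atTop)
    rw [add_zero] at hrhs
    exact le_of_tendsto_of_tendsto' hlhs hrhs fun n =>
      sum_range_div_add_card_filter_div_le (lam n) n (hlen n) N
  exact ⟨summable_of_sum_range_le hnonneg hpartial, Real.tsum_le_of_sum_range_le hnonneg hpartial⟩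

/-- Vershik–Kerov parameters: if `λ(n)` is a sequence of partitions (with at most `n`
parts) such that `α_i = lim λ(n)_i/n`, `β_i = lim λ(n)'_i/n` and `δ = lim |λ(n)|/n`
all exist and are finite, then `Σ (α_i + β_i)` converges and is at most `δ`. -/
theorem stmt1 (lam : ℕ → ℕ → ℕ) (hmono : ∀ n, Antitone (lam n))
    (hlen : ∀ n i, n ≤ i → lam n i = 0)
    (α β : ℕ → ℝ) (δ : ℝ)
    (hα : ∀ i, Tendsto (fun n => (lam n i : ℝ) / n) atTop (nhds (α i)))
    (hβ : ∀ i, Tendsto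
      (fun n => ((((Finset.range n).filter (fun k => i + 1 ≤ lam n k)).card : ℝ)) / n)
      atTop (nhds (β i)))
    (hδ : Tendsto (fun n => (∑ i ∈ Finset.range n, (lam n i : ℝ)) / n) atTop (nhds δ)) :
    Summable (fun i => α i + β i) ∧ ∑' i, (α i + β i) ≤ δ :=
  stmt1_general lam hlen α β δ hα hβ hδ
end

section
/- Let θ > 0, n ≥ 1, h ≥ θn - 1/2, and let λ = (λ_1 ≥ ... ≥ λ_n ≥ 0) be a partition with nonnegative integer parts. Define A = Σ_{i=1}^n [ (λ_i + h - θi)^2 - (h - θi)^2 ] and B = Σ_i [ (λ_i+h-θi)^2 - (h-θi)^2 ][ (λ_i+h-θi)^2 - (h-θi+1)^2 ] + (2θ/(1+θ)) Σ_{i<j} [ (λ_j+h-θj)^2 - (h-θj)^2 ][ (λ_i+h-θi)^2 - (h-θi+1)^2 ]. Then B ≤ A^2. -/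
/-!
Write `d_i = h - θ i`, `a_i = (λ_i + d_i)² - d_i²` and `c_i = (λ_i + d_i)² - (d_i + 1)²`, so that
`A = ∑ a_i` and `B = ∑ a_i c_i + k ∑_{i<j} a_j c_i` with `k = 2θ/(1+θ) ∈ [0, 2]`.
The hypothesis on `h` gives `d_i ≥ -1/2`, hence `a_i = λ_i (λ_i + 2 d_i) ≥ 0` (as `λ_i` is an integer)
and `c_i ≤ a_i`. Termwise, `a_i c_i ≤ a_i²` and `k a_j c_i ≤ 2 a_i a_j`, which sum to `B ≤ A²`.
-/

open Finset

theorem sq_sum_range_eq_sum_sq_add_two_mul_sum_Ioo {R : Type*} [CommSemiring R] (a : ℕ → R)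
    (n : ℕ) :
    (∑ i ∈ range n, a i) ^ 2
      = ∑ i ∈ range n, a i ^ 2 + 2 * ∑ i ∈ range n, ∑ j ∈ Ioo i n, a i * a j := by
  induction n with
  | zero => simp
  | succ n ih =>
    have hcross : ∑ i ∈ range (n + 1), ∑ j ∈ Ioo i (n + 1), a i * a j
        = ∑ i ∈ range n, ∑ j ∈ Ioo i n, a i * a j + (∑ i ∈ range n, a i) * a n := by
      rw [sum_range_succ, Ioo_add_one_right_eq_Ioc, Ioc_self, sum_empty, add_zero, sum_mul,
        ← sum_add_distrib]
      refine sum_congr rfl fun i hi => ?_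
      rw [Ioo_add_one_right_eq_Ioc, ← Ioo_insert_right (mem_range.mp hi), sum_insert (by simp),
        add_comm]
    rw [sum_range_succ, sum_range_succ (fun i => a i ^ 2), hcross, add_sq, ih]
    ring

theorem sum_mul_add_mul_sum_Ioo_le_sq_sum {R : Type*} [CommRing R] [LinearOrder R]
    [IsStrictOrderedRing R] {a c : ℕ → R} {k : R} {n : ℕ} (hk₀ : 0 ≤ k)
    (hk₂ : k ≤ 2) (ha : ∀ i < n, 0 ≤ a i) (hca : ∀ i < n, c i ≤ a i) :
    ∑ i ∈ range n, a i * c i + k * ∑ i ∈ range n, ∑ j ∈ Ioo i n, a j * c i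
      ≤ (∑ i ∈ range n, a i) ^ 2 := by
  have hkc : ∀ i < n, k * c i ≤ 2 * a i := fun i hi => by
    rcases le_or_gt 0 (c i) with hc | hc
    · nlinarith [hca i hi]
    · nlinarith [ha i hi]
  have hdiag : ∑ i ∈ range n, a i * c i ≤ ∑ i ∈ range n, a i ^ 2 :=
    sum_le_sum fun i hi => by
      rw [sq]; exact mul_le_mul_of_nonneg_left (hca i (mem_range.mp hi)) (ha i (mem_range.mp hi))
  have hcross : k * ∑ i ∈ range n, ∑ j ∈ Ioo i n, a j * c i
      ≤ 2 * ∑ i ∈ range n, ∑ j ∈ Ioo i n, a i * a j := by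
    simp only [mul_sum]
    refine sum_le_sum fun i hi => sum_le_sum fun j hj => ?_
    have := mul_le_mul_of_nonneg_left (hkc i (mem_range.mp hi)) (ha j (mem_Ioo.mp hj).2)
    linarith
  rw [sq_sum_range_eq_sum_sq_add_two_mul_sum_Ioo]
  linarith

theorem add_sq_sub_sq_nonneg_of_nat (m : ℕ) {d : ℝ} (hd : -(1 / 2) ≤ d) :
    0 ≤ ((m : ℝ) + d) ^ 2 - d ^ 2 := by
  have hfactor : ((m : ℝ) + d) ^ 2 - d ^ 2 = m * (m + 2 * d) := by ring
  rcases Nat.eq_zero_or_pos m with hm | hm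
  · simp [hm]
  · have : (1 : ℝ) ≤ m := by exact_mod_cast hm
    rw [hfactor]
    exact mul_nonneg (by positivity) (by linarith)

theorem stmt2_general (θ h : ℝ) (hθ : 0 < θ) (n : ℕ) (hh : θ * n - 1/2 ≤ h)
    (l : ℕ → ℕ) :
    (∑ i ∈ Finset.range n,
        (((l i : ℝ) + h - θ * (i + 1)) ^ 2 - (h - θ * (i + 1)) ^ 2) *
          (((l i : ℝ) + h - θ * (i + 1)) ^ 2 - (h - θ * (i + 1) + 1) ^ 2))
      + (2 * θ / (1 + θ)) *
        ∑ i ∈ Finset.range n, ∑ j ∈ Finset.Ioo i n,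
          (((l j : ℝ) + h - θ * (j + 1)) ^ 2 - (h - θ * (j + 1)) ^ 2) *
            (((l i : ℝ) + h - θ * (i + 1)) ^ 2 - (h - θ * (i + 1) + 1) ^ 2)
      ≤ (∑ i ∈ Finset.range n,
          (((l i : ℝ) + h - θ * (i + 1)) ^ 2 - (h - θ * (i + 1)) ^ 2)) ^ 2 := by
  have hd : ∀ i < n, -(1 / 2) ≤ h - θ * (i + 1) := fun i hi => by
    have : ((i : ℝ) + 1) ≤ n := by exact_mod_cast hi
    nlinarith
  refine sum_mul_add_mul_sum_Ioo_le_sq_sum (by positivity) ?_ (fun i hi => ?_) (fun i hi => ?_)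
  · rw [div_le_iff₀ (by linarith)]
    linarith
  · simpa only [add_sub_assoc] using add_sq_sub_sq_nonneg_of_nat (l i) (hd i hi)
  · nlinarith [hd i hi]

/-- Lemma 4.1: with `θ > 0`, `h ≥ θn - 1/2`, and a partition `λ` (encoded by the
antitone `l : ℕ → ℕ`, `l i` being the `(i+1)`-st part), the evaluations
`B = I_{(2)}(λ)` and `A = I_{(1)}(λ)` (given by the combinatorial formula)
satisfy `B ≤ A²`. -/
theorem stmt2 (θ h : ℝ) (hθ : 0 < θ) (n : ℕ) (hn : 1 ≤ n) (hh : θ * n - 1/2 ≤ h)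
    (l : ℕ → ℕ) (hmono : Antitone l) :
    (∑ i ∈ Finset.range n,
        (((l i : ℝ) + h - θ * (i + 1)) ^ 2 - (h - θ * (i + 1)) ^ 2) *
          (((l i : ℝ) + h - θ * (i + 1)) ^ 2 - (h - θ * (i + 1) + 1) ^ 2))
      + (2 * θ / (1 + θ)) *
        ∑ i ∈ Finset.range n, ∑ j ∈ Finset.Ioo i n,
          (((l j : ℝ) + h - θ * (j + 1)) ^ 2 - (h - θ * (j + 1)) ^ 2) *
            (((l i : ℝ) + h - θ * (i + 1)) ^ 2 - (h - θ * (i + 1) + 1) ^ 2)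
      ≤ (∑ i ∈ Finset.range n,
          (((l i : ℝ) + h - θ * (i + 1)) ^ 2 - (h - θ * (i + 1)) ^ 2)) ^ 2 :=
  stmt2_general θ h hθ n hh l
end

section
/- Let θ > 0 and let λ(n) be a sequence of partitions with at most n parts. Suppose h_n is a sequence of reals with h_n / n → h_0 where h_0 > θ/2, and suppose the quantities S_n = Σ_{i=1}^n λ(n)_i (λ(n)_i + 2h_n - 2θi) satisfy S_n = O(n^2) as n → ∞. Then |λ(n)| = Σ_i λ(n)_i = O(n). -/
open Filter Asymptotics Finset

/-!
Expand `S_n = ∑ λᵢ² + 2 h_n |λ| - 2θ ∑ λᵢ (i + 1)`. Chebyshev's sum inequality for the decreasing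
`λᵢ` against the increasing weights `i + 1` gives `2 ∑ λᵢ (i + 1) ≤ (n + 1) |λ|`, hence
`S_n ≥ (2 h_n - θ (n + 1)) |λ| ≥ (h₀ - θ/2) n |λ|` for large `n`, and `S_n = O(n²)` gives `|λ| = O(n)`.
-/

lemma sum_range_cast_add_one {α : Type*} [Field α] [CharZero α] (n : ℕ) :
    ∑ i ∈ range n, ((i : α) + 1) = n * (n + 1) / 2 := by
  induction n with
  | zero => simp
  | succ k ih => rw [sum_range_succ, ih]; push_cast; ring

lemma Antitone.two_mul_sum_mul_succ_le {α : Type*} [Field α] [LinearOrder α]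
    [IsStrictOrderedRing α] {f : ℕ → α} (hf : Antitone f) (n : ℕ) :
    2 * ∑ i ∈ range n, f i * (i + 1) ≤ (n + 1) * ∑ i ∈ range n, f i := by
  rcases n.eq_zero_or_pos with rfl | hn
  · simp
  have hanti : AntivaryOn f (fun i : ℕ => (i : α) + 1) (range n) :=
    fun i _ j _ hij => hf (Nat.cast_le.mp (lt_of_add_lt_add_right hij).le)
  have hcheb := hanti.card_mul_sum_le_sum_mul_sum
  rw [card_range, sum_range_cast_add_one] at hcheb
  have hn' : (0 : α) < n := by exact_mod_cast hn
  nlinarith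

lemma Antitone.two_mul_sub_mul_sum_le {α : Type*} [Field α] [LinearOrder α]
    [IsStrictOrderedRing α] {f : ℕ → α} (hf : Antitone f) {θ : α} (hθ : 0 ≤ θ) (c : α) (n : ℕ) :
    (2 * c - θ * (n + 1)) * ∑ i ∈ range n, f i ≤
      ∑ i ∈ range n, f i * (f i + 2 * c - 2 * θ * (i + 1)) := by
  have hsplit : ∑ i ∈ range n, f i * (f i + 2 * c - 2 * θ * (i + 1)) =
      ∑ i ∈ range n, f i ^ 2 + 2 * c * ∑ i ∈ range n, f i
        - θ * (2 * ∑ i ∈ range n, f i * (i + 1)) := by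
    simp only [mul_sum, ← sum_add_distrib, ← sum_sub_distrib]
    exact sum_congr rfl fun i _ => by ring
  have hsq : 0 ≤ ∑ i ∈ range n, f i ^ 2 := sum_nonneg fun i _ => sq_nonneg _
  rw [hsplit]
  nlinarith [mul_le_mul_of_nonneg_left (hf.two_mul_sum_mul_succ_le n) hθ]

lemma eventually_mul_le_two_mul_sub {θ h₀ ε : ℝ} {h : ℕ → ℝ}
    (hh : Tendsto (fun n => h n / n) atTop (nhds h₀)) (hε : ε < 2 * h₀ - θ) :
    ∀ᶠ n : ℕ in atTop, ε * n ≤ 2 * h n - θ * (n + 1) := by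
  have hlim : Tendsto (fun n : ℕ => 2 * (h n / n) - θ - θ / n) atTop (nhds (2 * h₀ - θ)) := by
    simpa using ((hh.const_mul 2).sub_const θ).sub (tendsto_const_div_atTop_nhds_zero_nat θ)
  filter_upwards [hlim.eventually (eventually_gt_nhds hε), eventually_gt_atTop 0]
    with n hn hn0
  have hn' : (0 : ℝ) < n := by exact_mod_cast hn0
  have hrw : 2 * (h n / n) - θ - θ / n = (2 * h n - θ * (n + 1)) / n := by field_simp; ring
  rw [hrw, lt_div_iff₀ hn'] at hn
  exact hn.le

lemma Asymptotics.IsBigO.of_mul_le {α : Type*} {l : Filter α} {f g k m : α → ℝ}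
    (hf : ∀ᶠ x in l, 0 ≤ f x) (hk : ∀ᶠ x in l, 0 < k x) (hfg : ∀ᶠ x in l, k x * f x ≤ g x)
    (hg : g =O[l] fun x => k x * m x) : f =O[l] m := by
  obtain ⟨C, hC⟩ := isBigO_iff.mp hg
  refine isBigO_iff.mpr ⟨C, ?_⟩
  filter_upwards [hf, hk, hfg, hC] with x hfx hkx hfgx hCx
  rw [norm_mul, Real.norm_of_nonneg hkx.le] at hCx
  rw [Real.norm_of_nonneg hfx, ← mul_le_mul_iff_right₀ hkx]
  calc k x * f x ≤ ‖g x‖ := hfgx.trans (Real.le_norm_self _)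
    _ ≤ k x * (C * ‖m x‖) := by linarith

theorem stmt4_general (θ : ℝ) (hθ : 0 < θ) (lam : ℕ → ℕ → ℕ)
    (hmono : ∀ n, Antitone (lam n))
    (h : ℕ → ℝ) (h₀ : ℝ) (hh : Tendsto (fun n => h n / n) atTop (nhds h₀))
    (hh₀ : θ / 2 < h₀)
    (hS : (fun n => ∑ i ∈ Finset.range n,
        (lam n i : ℝ) * ((lam n i : ℝ) + 2 * h n - 2 * θ * (i + 1)))
      =O[atTop] fun n => (n : ℝ) ^ 2) :
    (fun n => ∑ i ∈ Finset.range n, (lam n i : ℝ)) =O[atTop] fun n => (n : ℝ) := by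
  have hδ : 0 < h₀ - θ / 2 := sub_pos.mpr hh₀
  have hgap := eventually_mul_le_two_mul_sub (θ := θ) (ε := h₀ - θ / 2) hh (by linarith)
  refine IsBigO.of_mul_le (k := fun n : ℕ => (h₀ - θ / 2) * n) (m := fun n : ℕ => (n : ℝ))
    ?_ ?_ ?_ (hS.trans ?_)
  · exact Eventually.of_forall fun n => sum_nonneg fun i _ => Nat.cast_nonneg _
  · filter_upwards [eventually_gt_atTop 0] with n hn
    positivity
  · filter_upwards [hgap] with n hn
    exact (mul_le_mul_of_nonneg_right hn (sum_nonneg fun i _ => Nat.cast_nonneg _)).trans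
      ((Nat.mono_cast.comp_antitone (hmono n)).two_mul_sub_mul_sum_le hθ.le (h n) n)
  · simpa only [sq, mul_assoc] using isBigO_self_const_mul hδ.ne' (fun n : ℕ => (n : ℝ) * n) atTop

/-- Lemma 4.2: if `λ(n)` are partitions with at most `n` parts,
`h_n/n → h₀ > θ/2`, and `S_n = Σ_i λ(n)_i (λ(n)_i + 2h_n - 2θi) = O(n²)`,
then `|λ(n)| = O(n)`. -/
theorem stmt4 (θ : ℝ) (hθ : 0 < θ) (lam : ℕ → ℕ → ℕ)
    (hmono : ∀ n, Antitone (lam n)) (hlen : ∀ n i, n ≤ i → lam n i = 0)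
    (h : ℕ → ℝ) (h₀ : ℝ) (hh : Tendsto (fun n => h n / n) atTop (nhds h₀))
    (hh₀ : θ / 2 < h₀)
    (hS : (fun n => ∑ i ∈ Finset.range n,
        (lam n i : ℝ) * ((lam n i : ℝ) + 2 * h n - 2 * θ * (i + 1)))
      =O[atTop] fun n => (n : ℝ) ^ 2) :
    (fun n => ∑ i ∈ Finset.range n, (lam n i : ℝ)) =O[atTop] fun n => (n : ℝ) :=
  stmt4_general θ hθ lam hmono h h₀ hh hh₀ hS
end

section
/- Let (A_i), (B_i), (A'_i), (B'_i) be weakly decreasing summable sequences of nonnegative reals and γ, γ' ≥ 0. If e^{γ y} Π_{i=1}^∞ (1 + B_i y)/(1 - A_i y)^θ = e^{γ' y} Π_{i=1}^∞ (1 + B'_i y)/(1 - A'_i y)^θ for all y in a real interval [-2, 0] (with θ > 0 fixed), then A_i = A'_i and B_i = B'_i for all i, and γ = γ'. -/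
/-!
Near `y = 0⁻` the logarithm of `e^{γy} ∏ (1 + B_i y)/(1 - A_i y)^θ` is the power series
`γ y + ∑_{n ≥ 1} (θ p_n(A) - (-1)^n p_n(B)) yⁿ / n` in the power sums `p_n(X) = ∑ X_iⁿ`.
Since the two functions agree on an interval ending at `0`, the identity theorem makes the
coefficients agree, so `θ (p_n(A) - p_n(A')) = (-1)ⁿ (p_n(B) - p_n(B'))` for `n ≥ 2`.
If the data differ, let `m` be the largest of the values at which `A, A'` resp. `B, B'` first
disagree. Dividing by `mⁿ` and letting `n → ∞` through even and through odd `n` shows that both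
normalised differences tend to `0`, while the pair responsible for `m` has a nonzero limit (it
counts the entries equal to `m` in one tail but not in the other). Once `A = A'` and `B = B'`,
the coefficient of `y` gives `γ = γ'`.
-/

open Filter Topology Real

theorem eq_zero_of_hasSum_mul_pow_eq_zero {a : ℕ → ℝ} {r : ℝ} (hr : 0 < r)
    (h : ∀ y ∈ Set.Ioo (-r) 0, HasSum (fun n => a n * y ^ n) 0) : a = 0 := by
  set p := FormalMultilinearSeries.ofScalars ℝ a
  have hsum : ∀ y ∈ Set.Ioo (-r) 0, p.sum y = 0 := fun y hy => by
    simpa [p, FormalMultilinearSeries.sum, FormalMultilinearSeries.ofScalars_apply_eq,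
      mul_comm] using (h y hy).tsum_eq
  have hrad : 0 < p.radius := by
    have hy : -(r / 2) ∈ Set.Ioo (-r) 0 := ⟨by linarith, by linarith⟩
    refine lt_of_lt_of_le ?_ (p.le_radius_of_tendsto (r := ⟨r / 2, by positivity⟩) (l := 0) ?_)
    · exact ENNReal.coe_pos.2 (NNReal.coe_pos.1 (half_pos hr))
    · have := (h _ hy).summable.tendsto_atTop_zero.norm
      simp only [norm_mul, norm_pow, norm_neg, Real.norm_of_nonneg (half_pos hr).le,
        norm_zero] at this
      simp only [p, FormalMultilinearSeries.ofScalars_norm]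
      exact this
  have hp : HasFPowerSeriesAt p.sum p 0 := (p.hasFPowerSeriesOnBall hrad).hasFPowerSeriesAt
  have hfreq : ∃ᶠ y in 𝓝[≠] 0, p.sum y = 0 := by
    refine (Filter.Eventually.frequently ?_).filter_mono (nhdsLT_le_nhdsNE 0)
    filter_upwards [Ioo_mem_nhdsLT (neg_lt_zero.2 hr)] using hsum
  rw [← FormalMultilinearSeries.ofScalars_series_eq_zero (E := ℝ), ← hp.locally_zero_iff]
  exact hp.analyticAt.frequently_zero_iff_eventually_zero.1 hfreq

noncomputable def logTerm (θ a b y : ℝ) (k : ℕ) : ℝ :=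
  (θ * a ^ (k + 1) - (-1) ^ (k + 1) * b ^ (k + 1)) / (k + 1) * y ^ (k + 1)

lemma hasSum_logTerm (θ : ℝ) {a b y : ℝ} (ha : |a * y| < 1) (hb : |b * y| < 1) :
    HasSum (logTerm θ a b y) (log (1 + b * y) - θ * log (1 - a * y)) := by
  have hA := (Real.hasSum_pow_div_log_of_abs_lt_one ha).mul_left θ
  have hB := Real.hasSum_pow_div_log_of_abs_lt_one (x := -(b * y)) (by rwa [abs_neg])
  rw [sub_neg_eq_add] at hB
  rw [show log (1 + b * y) - θ * log (1 - a * y) = θ * -log (1 - a * y) - -log (1 + b * y) by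
    ring]
  have hterm : logTerm θ a b y = fun k : ℕ => θ * ((a * y) ^ (k + 1) / (k + 1))
      - (-(b * y)) ^ (k + 1) / (k + 1) := by
    funext k
    rw [logTerm, neg_pow (b * y), mul_pow, mul_pow]
    ring
  exact hterm ▸ hA.sub hB

lemma norm_logTerm_le (θ : ℝ) {a b y : ℝ} (ha : 0 ≤ a) (hb : 0 ≤ b) (hay : a * |y| ≤ 1 / 2)
    (hby : b * |y| ≤ 1 / 2) (k : ℕ) :
    ‖logTerm θ a b y k‖ ≤ (|θ| * a + b) * |y| * (1 / 2) ^ k := by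
  have geom : ∀ x : ℝ, 0 ≤ x → x ≤ 1 / 2 → x ^ (k + 1) ≤ x * (1 / 2) ^ k := fun x hx0 hx =>
    calc x ^ (k + 1) = x * x ^ k := pow_succ' x k
      _ ≤ x * (1 / 2) ^ k := by gcongr
  have hk : (1 : ℝ) ≤ k + 1 := by simp
  calc ‖logTerm θ a b y k‖
      = |θ * a ^ (k + 1) - (-1) ^ (k + 1) * b ^ (k + 1)| / (k + 1) * |y| ^ (k + 1) := by
        rw [logTerm, Real.norm_eq_abs, abs_mul, abs_div, abs_pow,
          abs_of_pos (by positivity : (0 : ℝ) < k + 1)]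
    _ ≤ (|θ| * a ^ (k + 1) + b ^ (k + 1)) * |y| ^ (k + 1) := by
        gcongr
        calc _ ≤ |θ * a ^ (k + 1) - (-1) ^ (k + 1) * b ^ (k + 1)| :=
              div_le_self (abs_nonneg _) hk
          _ ≤ |θ| * a ^ (k + 1) + b ^ (k + 1) := by
            refine (abs_sub _ _).trans_eq ?_
            simp [abs_mul, abs_of_nonneg ha, abs_of_nonneg hb]
    _ = |θ| * (a * |y|) ^ (k + 1) + (b * |y|) ^ (k + 1) := by ring
    _ ≤ |θ| * ((a * |y|) * (1 / 2) ^ k) + (b * |y|) * (1 / 2) ^ k := by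
        gcongr
        · exact geom _ (by positivity) hay
        · exact geom _ (by positivity) hby
    _ = (|θ| * a + b) * |y| * (1 / 2) ^ k := by ring

lemma summable_pow_succ {A : ℕ → ℝ} (hA0 : ∀ i, 0 ≤ A i) (hAs : Summable A) (k : ℕ) :
    Summable fun i => A i ^ (k + 1) := by
  refine hAs.of_norm_bounded_eventually_nat ?_
  filter_upwards [hAs.tendsto_atTop_zero.eventually (ge_mem_nhds one_pos)] with i hi
  rw [Real.norm_of_nonneg (pow_nonneg (hA0 i) _)]
  exact pow_le_of_le_one (hA0 i) hi k.succ_ne_zero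

lemma summable_logTerm (θ : ℝ) {A B : ℕ → ℝ} (hA0 : ∀ i, 0 ≤ A i) (hB0 : ∀ i, 0 ≤ B i)
    (hAs : Summable A) (hBs : Summable B) {y : ℝ} (hAy : ∀ i, A i * |y| ≤ 1 / 2)
    (hBy : ∀ i, B i * |y| ≤ 1 / 2) :
    Summable fun p : ℕ × ℕ => logTerm θ (A p.2) (B p.2) y p.1 := by
  have hgeom : Summable fun k : ℕ => ‖(1 / 2 : ℝ) ^ k‖ := by
    simpa using summable_geometric_two
  have hcoef : Summable fun i => ‖(|θ| * A i + B i) * |y|‖ :=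
    (((hAs.mul_left |θ|).add hBs).mul_right |y|).norm
  refine (summable_mul_of_summable_norm hgeom hcoef).of_norm_bounded fun p => ?_
  rw [mul_comm]
  exact norm_logTerm_le θ (hA0 _) (hB0 _) (hAy _) (hBy _) _

lemma tsum_logTerm (θ : ℝ) {A B : ℕ → ℝ} (hA0 : ∀ i, 0 ≤ A i) (hB0 : ∀ i, 0 ≤ B i)
    (hAs : Summable A) (hBs : Summable B) (y : ℝ) (k : ℕ) :
    ∑' i, logTerm θ (A i) (B i) y k
      = (θ * ∑' i, A i ^ (k + 1) - (-1) ^ (k + 1) * ∑' i, B i ^ (k + 1)) / (k + 1)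
          * y ^ (k + 1) := by
  simp only [logTerm]
  rw [tsum_mul_right, tsum_div_const, ((summable_pow_succ hA0 hAs k).mul_left θ).tsum_sub
    ((summable_pow_succ hB0 hBs k).mul_left _), tsum_mul_left, tsum_mul_left]

noncomputable def logCoeff (θ γ : ℝ) (A B : ℕ → ℝ) (k : ℕ) : ℝ :=
  (if k = 0 then γ else 0)
    + (θ * ∑' i, A i ^ (k + 1) - (-1) ^ (k + 1) * ∑' i, B i ^ (k + 1)) / (k + 1)

theorem hasSum_logCoeff_mul_pow (θ γ : ℝ) {A B : ℕ → ℝ} (hA0 : ∀ i, 0 ≤ A i)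
    (hB0 : ∀ i, 0 ≤ B i) (hAs : Summable A) (hBs : Summable B) {y : ℝ}
    (hAy : ∀ i, A i * |y| ≤ 1 / 2) (hBy : ∀ i, B i * |y| ≤ 1 / 2) :
    HasSum (fun k => logCoeff θ γ A B k * y ^ (k + 1))
      (log (exp (γ * y) * ∏' i, (1 + B i * y) / (1 - A i * y) ^ θ)) := by
  have hlt : ∀ X : ℕ → ℝ, (∀ i, 0 ≤ X i) → (∀ i, X i * |y| ≤ 1 / 2) → ∀ i, |X i * y| < 1 :=
    fun X hX0 hXy i => by rw [abs_mul, abs_of_nonneg (hX0 i)]; linarith [hXy i]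
  obtain ⟨L, hL⟩ := summable_logTerm θ hA0 hB0 hAs hBs hAy hBy
  have hk : HasSum (fun k => ∑' i, logTerm θ (A i) (B i) y k) L :=
    hL.prod_fiberwise fun k => (hL.summable.prod_factor k).hasSum
  have hi : HasSum (fun i => log (1 + B i * y) - θ * log (1 - A i * y)) L := by
    have := hL.summable.prod_symm.hasSum.prod_fiberwise fun i =>
      (hasSum_logTerm θ (hlt A hA0 hAy i) (hlt B hB0 hBy i) :
        HasSum (fun k => logTerm θ (A i) (B i) y k) _)
    rwa [← hL.tsum_eq, ← (Equiv.prodComm ℕ ℕ).tsum_eq]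
  have hApos : ∀ i, 0 < 1 - A i * y := fun i => by linarith [(abs_lt.1 (hlt A hA0 hAy i)).2]
  have hBpos : ∀ i, 0 < 1 + B i * y := fun i => by linarith [(abs_lt.1 (hlt B hB0 hBy i)).1]
  have hprod : ∏' i, (1 + B i * y) / (1 - A i * y) ^ θ = exp L := by
    refine (hasProd_of_hasSum_log (fun i => div_pos (hBpos i) (rpow_pos_of_pos (hApos i) θ))
      (hi.congr_fun fun i => ?_)).tprod_eq
    rw [log_div (hBpos i).ne' (rpow_pos_of_pos (hApos i) θ).ne', log_rpow (hApos i)]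
  rw [hprod, ← exp_add, log_exp]
  have hγ : HasSum (fun k : ℕ => if k = 0 then γ * y else 0) (γ * y) := hasSum_ite_eq 0 _
  refine (hγ.add hk).congr_fun fun k => ?_
  rw [tsum_logTerm θ hA0 hB0 hAs hBs, logCoeff]
  split_ifs with h
  · subst h; ring
  · ring

lemma eventually_mul_abs_le_half (c : ℝ) : ∀ᶠ y in 𝓝 (0 : ℝ), c * |y| ≤ 1 / 2 := by
  have : Tendsto (fun y : ℝ => c * |y|) (𝓝 0) (𝓝 0) := by
    simpa using (continuous_abs.tendsto (0 : ℝ)).const_mul c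
  exact this.eventually (eventually_le_nhds (by norm_num))

theorem logCoeff_eq_of_eqOn {θ γ γ' : ℝ} {A B A' B' : ℕ → ℝ} (hA0 : ∀ i, 0 ≤ A i)
    (hB0 : ∀ i, 0 ≤ B i) (hA'0 : ∀ i, 0 ≤ A' i) (hB'0 : ∀ i, 0 ≤ B' i) (hAs : Summable A)
    (hBs : Summable B) (hA's : Summable A') (hB's : Summable B') {r : ℝ} (hr : 0 < r)
    (heq : ∀ y ∈ Set.Ioo (-r) 0,
      exp (γ * y) * ∏' i, (1 + B i * y) / (1 - A i * y) ^ θ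
        = exp (γ' * y) * ∏' i, (1 + B' i * y) / (1 - A' i * y) ^ θ) :
    logCoeff θ γ A B = logCoeff θ γ' A' B' := by
  have bound : ∀ X : ℕ → ℝ, (∀ i, 0 ≤ X i) → Summable X → ∀ y, (∑' i, X i) * |y| ≤ 1 / 2 →
      ∀ i, X i * |y| ≤ 1 / 2 := fun X hX0 hXs y hy i =>
    (mul_le_mul_of_nonneg_right (hXs.le_tsum i fun j _ => hX0 j) (abs_nonneg y)).trans hy
  obtain ⟨δ, hδ, hball⟩ := Metric.eventually_nhds_iff.1
    (((eventually_mul_abs_le_half (∑' i, A i)).and (eventually_mul_abs_le_half (∑' i, B i))).and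
      ((eventually_mul_abs_le_half (∑' i, A' i)).and (eventually_mul_abs_le_half (∑' i, B' i))))
  rw [← sub_eq_zero]
  refine eq_zero_of_hasSum_mul_pow_eq_zero (lt_min hr hδ) fun y hy => ?_
  obtain ⟨⟨hAy, hBy⟩, hA'y, hB'y⟩ := hball (y := y) <| by
    rw [Real.dist_0_eq_abs, abs_lt]
    exact ⟨(neg_le_neg (min_le_right r δ)).trans_lt hy.1, by linarith [hy.2]⟩
  have hF := hasSum_logCoeff_mul_pow θ γ hA0 hB0 hAs hBs (bound A hA0 hAs y hAy)
    (bound B hB0 hBs y hBy)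
  have hF' := hasSum_logCoeff_mul_pow θ γ' hA'0 hB'0 hA's hB's (bound A' hA'0 hA's y hA'y)
    (bound B' hB'0 hB's y hB'y)
  rw [heq y ⟨(neg_le_neg (min_le_left r δ)).trans_lt hy.1, hy.2⟩] at hF
  have := (hF.sub hF').mul_left y⁻¹
  rw [sub_self, mul_zero] at this
  refine this.congr_fun fun k => ?_
  field_simp [hy.2.ne]
  rw [Pi.sub_apply]
  ring

lemma powerSum_eq_of_logCoeff_eq {θ γ γ' : ℝ} {A B A' B' : ℕ → ℝ}
    (h : logCoeff θ γ A B = logCoeff θ γ' A' B') (n : ℕ) (hn : 2 ≤ n) :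
    θ * ∑' i, A i ^ n - (-1) ^ n * ∑' i, B i ^ n
      = θ * ∑' i, A' i ^ n - (-1) ^ n * ∑' i, B' i ^ n := by
  obtain ⟨k, rfl⟩ : ∃ k, n = k + 1 := ⟨n - 1, by omega⟩
  have := congrFun h k
  simp only [logCoeff, if_neg (by omega : k ≠ 0), zero_add] at this
  rwa [div_left_inj' (by positivity)] at this

lemma tendsto_tsum_pow_div_pow {X : ℕ → ℝ} (hX0 : ∀ i, 0 ≤ X i) (hXs : Summable X) {m : ℝ}
    (hm : 0 < m) (hXm : ∀ i, X i ≤ m) :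
    Tendsto (fun n => (∑' i, X i ^ n) / m ^ n) atTop (𝓝 (∑' i, if X i = m then 1 else 0)) := by
  simp only [← tsum_div_const, ← div_pow]
  refine tendsto_tsum_of_dominated_convergence (hXs.div_const m) (fun i => ?_) ?_
  · split_ifs with h
    · simp [h, hm.ne']
    · exact tendsto_pow_atTop_nhds_zero_of_lt_one (div_nonneg (hX0 i) hm.le)
        ((div_lt_one hm).2 ((hXm i).lt_of_ne h))
  · filter_upwards [eventually_ne_atTop 0] with n hn i
    rw [Real.norm_of_nonneg (by have := hX0 i; positivity)]
    exact pow_le_of_le_one (div_nonneg (hX0 i) hm.le) ((div_le_one hm).2 (hXm i)) hn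

lemma eq_zero_of_tendsto_of_mul_eq_neg_one_pow_mul {θ a b : ℝ} {u v : ℕ → ℝ} (hθ : θ ≠ 0)
    (hu : Tendsto u atTop (𝓝 a)) (hv : Tendsto v atTop (𝓝 b))
    (huv : ∀ᶠ n in atTop, θ * u n = (-1) ^ n * v n) : a = 0 ∧ b = 0 := by
  have hlim : ∀ r : ℕ, θ * a = (-1) ^ r * b := fun r => by
    have h2 : Tendsto (fun n : ℕ => 2 * n + r) atTop atTop :=
      tendsto_atTop_mono (fun n => show n ≤ 2 * n + r by omega) tendsto_id
    refine tendsto_nhds_unique_of_eventuallyEq ((hu.comp h2).const_mul θ)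
      ((hv.comp h2).const_mul _) ?_
    filter_upwards [h2.eventually huv] with n hn
    simp [hn, pow_add, pow_mul]
  have hb : b = 0 := by linarith [hlim 0, hlim 1]
  refine ⟨?_, hb⟩
  simpa [hb, hθ] using hlim 0

lemma tsum_pow_sub_tsum_pow_eq_of_eq_of_lt {X X' : ℕ → ℝ} (hX0 : ∀ i, 0 ≤ X i)
    (hX'0 : ∀ i, 0 ≤ X' i) (hXs : Summable X) (hX's : Summable X') {i₀ : ℕ}
    (h : ∀ i < i₀, X i = X' i) (n : ℕ) :
    ∑' i, X i ^ (n + 1) - ∑' i, X' i ^ (n + 1)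
      = ∑' i, X (i + i₀) ^ (n + 1) - ∑' i, X' (i + i₀) ^ (n + 1) := by
  rw [← (summable_pow_succ hX0 hXs n).sum_add_tsum_nat_add i₀,
    ← (summable_pow_succ hX'0 hX's n).sum_add_tsum_nat_add i₀,
    Finset.sum_congr rfl fun i hi => by rw [h i (Finset.mem_range.1 hi)]]
  ring

lemma one_le_tsum_ite_eq {Y : ℕ → ℝ} (hY0 : ∀ i, 0 ≤ Y i) (hYs : Summable Y) {m : ℝ}
    (hm : 0 < m) (h : Y 0 = m) : 1 ≤ ∑' i, if Y i = m then (1 : ℝ) else 0 := by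
  have hs : Summable fun i => if Y i = m then (1 : ℝ) else 0 := by
    refine (hYs.div_const m).of_nonneg_of_le (fun i => by positivity) fun i => ?_
    split_ifs with hi
    · rw [hi, div_self hm.ne']
    · exact div_nonneg (hY0 i) hm.le
  simpa [h] using hs.le_tsum 0 fun j _ => by positivity

/-- `ℓ` is `max (X i₀) (X' i₀)` for the first index `i₀` with `X i₀ ≠ X' i₀` (and `0` if
`X = X'`); the limit `L` counts the entries equal to `m` in the tails from `i₀` on. -/
lemma exists_discrepancy_level {X X' : ℕ → ℝ} (hX : Antitone X) (hX' : Antitone X')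
    (hX0 : ∀ i, 0 ≤ X i) (hX'0 : ∀ i, 0 ≤ X' i) (hXs : Summable X) (hX's : Summable X') :
    ∃ ℓ : ℝ, (X ≠ X' → 0 < ℓ) ∧ ∀ m, ℓ ≤ m → 0 < m → ∃ L,
      Tendsto (fun n => (∑' i, X i ^ n - ∑' i, X' i ^ n) / m ^ n) atTop (𝓝 L) ∧
        (L = 0 → ℓ < m) := by
  by_cases hXX : X = X'
  · exact ⟨0, fun h => (h hXX).elim, fun m _ hm => ⟨0, by simp [hXX], fun _ => hm⟩⟩
  obtain ⟨i₀, hne, hlt⟩ : ∃ i₀, X i₀ ≠ X' i₀ ∧ ∀ i < i₀, X i = X' i :=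
    ⟨Nat.find (Function.ne_iff.1 hXX), Nat.find_spec (Function.ne_iff.1 hXX),
      fun i hi => not_not.1 (Nat.find_min _ hi)⟩
  refine ⟨max (X i₀) (X' i₀), fun _ => ?_, fun m hℓm hm => ?_⟩
  · rcases hne.lt_or_gt with h | h
    · exact lt_max_of_lt_right ((hX0 i₀).trans_lt h)
    · exact lt_max_of_lt_left ((hX'0 i₀).trans_lt h)
  set c : (ℕ → ℝ) → ℝ := fun Y => ∑' i, if Y (i + i₀) = m then 1 else 0
  have htail : ∀ Y : ℕ → ℝ, Antitone Y → (∀ i, 0 ≤ Y i) → Summable Y → Y i₀ ≤ m →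
      Tendsto (fun n => (∑' i, Y (i + i₀) ^ n) / m ^ n) atTop (𝓝 (c Y)) :=
    fun Y hY hY0 hYs hYm => tendsto_tsum_pow_div_pow (fun i => hY0 _)
      ((summable_nat_add_iff i₀).2 hYs) hm fun i => (hY (by omega)).trans hYm
  refine ⟨c X - c X', ?_, fun hL => ?_⟩
  · refine ((htail X hX hX0 hXs ((le_max_left _ _).trans hℓm)).sub
      (htail X' hX' hX'0 hX's ((le_max_right _ _).trans hℓm))).congr' ?_
    filter_upwards [eventually_ne_atTop 0] with n hn
    obtain ⟨k, rfl⟩ := Nat.exists_eq_succ_of_ne_zero hn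
    rw [← sub_div, tsum_pow_sub_tsum_pow_eq_of_eq_of_lt hX0 hX'0 hXs hX's hlt]
  have hzero : ∀ Y : ℕ → ℝ, Antitone Y → Y i₀ < m → c Y = 0 := fun Y hY hYm => by
    simp [c, ((hY (by omega : i₀ ≤ _ + i₀)).trans_lt hYm).ne]
  have hone : ∀ Y : ℕ → ℝ, (∀ i, 0 ≤ Y i) → Summable Y → Y i₀ = m → 1 ≤ c Y :=
    fun Y hY0 hYs hYm => one_le_tsum_ite_eq (fun i => hY0 _)
      ((summable_nat_add_iff i₀).2 hYs) hm (by simpa using hYm)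
  refine hℓm.lt_of_ne fun hℓ => ?_
  rcases max_choice (X i₀) (X' i₀) with h | h <;> rw [h] at hℓ
  · have := hzero X' hX' ((le_max_right _ _).trans hℓm |>.lt_of_ne (hℓ ▸ hne.symm))
    linarith [hone X hX0 hXs hℓ]
  · have := hzero X hX ((le_max_left _ _).trans hℓm |>.lt_of_ne (hℓ ▸ hne))
    linarith [hone X' hX'0 hX's hℓ]

theorem eq_and_eq_of_powerSum_eq {θ : ℝ} (hθ : θ ≠ 0) {A B A' B' : ℕ → ℝ}
    (hA : Antitone A) (hB : Antitone B) (hA' : Antitone A') (hB' : Antitone B')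
    (hA0 : ∀ i, 0 ≤ A i) (hB0 : ∀ i, 0 ≤ B i) (hA'0 : ∀ i, 0 ≤ A' i) (hB'0 : ∀ i, 0 ≤ B' i)
    (hAs : Summable A) (hBs : Summable B) (hA's : Summable A') (hB's : Summable B')
    (h : ∀ n ≥ 2, θ * ∑' i, A i ^ n - (-1) ^ n * ∑' i, B i ^ n
      = θ * ∑' i, A' i ^ n - (-1) ^ n * ∑' i, B' i ^ n) :
    A = A' ∧ B = B' := by
  obtain ⟨ℓA, hℓA, hlimA⟩ := exists_discrepancy_level hA hA' hA0 hA'0 hAs hA's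
  obtain ⟨ℓB, hℓB, hlimB⟩ := exists_discrepancy_level hB hB' hB0 hB'0 hBs hB's
  by_contra hne
  have hm : 0 < max ℓA ℓB := by
    rcases not_and_or.1 hne with hne | hne
    · exact lt_max_of_lt_left (hℓA hne)
    · exact lt_max_of_lt_right (hℓB hne)
  obtain ⟨LA, hLA, hLA0⟩ := hlimA _ (le_max_left _ _) hm
  obtain ⟨LB, hLB, hLB0⟩ := hlimB _ (le_max_right _ _) hm
  obtain ⟨hA_zero, hB_zero⟩ := eq_zero_of_tendsto_of_mul_eq_neg_one_pow_mul hθ hLA hLB <| by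
    filter_upwards [eventually_ge_atTop 2] with n hn
    rw [mul_div_assoc', mul_div_assoc']
    congr 1
    linear_combination h n hn
  exact (max_lt (hLA0 hA_zero) (hLB0 hB_zero)).false

theorem stmt6_general (θ : ℝ) (hθ : 0 < θ)
    (A B A' B' : ℕ → ℝ)
    (hA : Antitone A) (hB : Antitone B) (hA' : Antitone A') (hB' : Antitone B')
    (hA0 : ∀ i, 0 ≤ A i) (hB0 : ∀ i, 0 ≤ B i) (hA'0 : ∀ i, 0 ≤ A' i) (hB'0 : ∀ i, 0 ≤ B' i)
    (hAs : Summable A) (hBs : Summable B) (hA's : Summable A') (hB's : Summable B')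
    (γ γ' : ℝ)
    (heq : ∀ y ∈ Set.Icc (-2 : ℝ) 0,
      Real.exp (γ * y) * ∏' i, (1 + B i * y) / (1 - A i * y) ^ θ
        = Real.exp (γ' * y) * ∏' i, (1 + B' i * y) / (1 - A' i * y) ^ θ) :
    (∀ i, A i = A' i ∧ B i = B' i) ∧ γ = γ' := by
  have hcoeff := logCoeff_eq_of_eqOn hA0 hB0 hA'0 hB'0 hAs hBs hA's hB's two_pos
    fun y hy => heq y ⟨hy.1.le, hy.2.le⟩
  obtain ⟨rfl, rfl⟩ := eq_and_eq_of_powerSum_eq hθ.ne' hA hB hA' hB' hA0 hB0 hA'0 hB'0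
    hAs hBs hA's hB's (powerSum_eq_of_logCoeff_eq hcoeff)
  exact ⟨fun i => ⟨rfl, rfl⟩, by simpa [logCoeff] using congrFun hcoeff 0⟩

/-- Lemma 4.3 (uniqueness of parameters): if two data sets
`(A, B, γ)` and `(A', B', γ')` of weakly decreasing summable nonnegative sequences
and nonnegative constants yield the same function
`e^{γy} Π (1 + B_i y)/(1 - A_i y)^θ` on `[-2, 0]`, then they coincide. -/
theorem stmt6 (θ : ℝ) (hθ : 0 < θ)
    (A B A' B' : ℕ → ℝ)
    (hA : Antitone A) (hB : Antitone B) (hA' : Antitone A') (hB' : Antitone B')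
    (hA0 : ∀ i, 0 ≤ A i) (hB0 : ∀ i, 0 ≤ B i) (hA'0 : ∀ i, 0 ≤ A' i) (hB'0 : ∀ i, 0 ≤ B' i)
    (hAs : Summable A) (hBs : Summable B) (hA's : Summable A') (hB's : Summable B')
    (γ γ' : ℝ) (hγ : 0 ≤ γ) (hγ' : 0 ≤ γ')
    (heq : ∀ y ∈ Set.Icc (-2 : ℝ) 0,
      Real.exp (γ * y) * ∏' i, (1 + B i * y) / (1 - A i * y) ^ θ
        = Real.exp (γ' * y) * ∏' i, (1 + B' i * y) / (1 - A' i * y) ^ θ) :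
    (∀ i, A i = A' i ∧ B i = B' i) ∧ γ = γ' :=
  stmt6_general θ hθ A B A' B' hA hB hA' hB' hA0 hB0 hA'0 hB'0 hAs hBs hA's hB's γ γ' heq
end

section
/- The factorial Schur polynomial satisfies the combinatorial formula s_μ(y_1,...,y_n | A) = Σ_T Π_{(i,j)∈μ} (y_{T(i,j)} - A_{j - i + n + 1 - T(i,j)}), where the sum is over all reverse tableaux T of shape μ with entries in {1,...,n}. -/
/-!
Induction on the number of variables: both sides obey the same branching rule.

For `m ≤ m'` one has `(x|a)^{m'} = (∏_{m ≤ k < m'} (z - a_k)) (x|a)^m + (x - z) Σ_{m ≤ r < m'}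
(∏_{r < k < m'} (z - a_k)) (x|a)^r`. With `z = y_1`, subtracting from each column of the
alternant a multiple of the next one clears the first row except in the last column; expanding
along that row and then by multilinearity in the columns writes the alternant in `y_1, …, y_{n+1}`
as `∏_{i > 1} (y_1 - y_i)` times a sum, over the partitions `ν` interlacing `μ`, of the weight of
the horizontal strip `μ / ν` times the alternant of shape `ν` in `y_2, …, y_{n+1}`.

In a reverse tableau the boxes holding the smallest letter form exactly such a horizontal strip
`μ / ν`, and erasing them (and lowering the other entries by one) is a bijection onto the reverse
tableaux of shape `ν` in the remaining letters, under which the weight factors in the same way.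
-/

open Finset Matrix

theorem Fin.val_lt_card_filter_iff {M : ℕ} {p : Fin M → Prop} [DecidablePred p]
    (hp : ∀ j j', j ≤ j' → p j' → p j) (j : Fin M) : (j : ℕ) < #{j | p j} ↔ p j := by
  rcases (show IsLowerSet {j | p j} from fun j' j hj h => hp j j' hj h).eq_univ_or_Iio with
    h | ⟨b, h⟩
  · have hall : ∀ j, p j := fun j => Set.eq_univ_iff_forall.mp h j
    simp [hall]
  · have hb : univ.filter p = Iio b := by
      ext j'
      simpa using Set.ext_iff.mp h j'
    rw [hb, Fin.card_Iio, ← Fin.lt_def]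
    exact (Set.ext_iff.mp h j).symm

theorem Fin.prod_filter_val_mem {β : Type*} [CommMonoid β] {M : ℕ} (s : Finset ℕ)
    (hs : ∀ t ∈ s, t < M) (f : ℕ → β) :
    ∏ j ∈ univ.filter (fun j : Fin M => (j : ℕ) ∈ s), f j = ∏ t ∈ s, f t := by
  rw [prod_filter, Fin.prod_univ_eq_prod_range (fun t => if t ∈ s then f t else 1), ← prod_filter,
    filter_mem_eq_inter, inter_eq_right.mpr fun t ht => mem_range.mpr (hs t ht)]

theorem Fin.prod_prod_filter_lt_sub_succ {R : Type*} [CommRing R] {n : ℕ} (y : Fin (n + 1) → R) :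
    ∏ i, ∏ j ∈ univ.filter (fun j => i < j), (y i - y j) =
      (∏ i : Fin n, (y 0 - y i.succ)) *
        ∏ i : Fin n, ∏ j ∈ univ.filter (fun j => i < j), (y i.succ - y j.succ) := by
  simp_rw [filter_lt_eq_Ioi]
  rw [Fin.prod_univ_succ, Fin.prod_Ioi_zero]
  simp [Fin.prod_Ioi_succ]

namespace Matrix

variable {R : Type*} [CommRing R]

theorem det_eq_of_forall_col_eq_sub_mul_succ {n : ℕ} {A B : Matrix (Fin (n + 1)) (Fin (n + 1)) R}
    (c : Fin n → R) (hlast : ∀ i, B i (Fin.last n) = A i (Fin.last n))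
    (hcastSucc : ∀ i (j : Fin n), B i j.castSucc = A i j.castSucc - c j * A i j.succ) :
    det B = det A := by
  rw [← det_submatrix_equiv_self Fin.revPerm B, ← det_submatrix_equiv_self Fin.revPerm A]
  symm
  refine det_eq_of_forall_col_eq_smul_add_pred (fun j => c j.rev) (fun i => ?_) fun i j => ?_
  · simp [hlast]
  · simp [Fin.rev_succ, Fin.rev_castSucc, hcastSucc]

theorem det_of_sum_mul {n ι : Type*} [Fintype n] [DecidableEq n] (S : n → Finset ι)
    (w : n → ι → R) (v : ι → n → R) :
    det (of fun i j => ∑ r ∈ S j, w j r * v r i) =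
      ∑ r ∈ Fintype.piFinset S, (∏ j, w j (r j)) * det (of fun i j => v (r j) i) := by
  rw [← det_transpose]
  have hcols : (of fun i j => ∑ r ∈ S j, w j r * v r i)ᵀ = fun j => ∑ r ∈ S j, w j r • v r := by
    ext j i; simp
  rw [hcols]
  refine ((detRowAlternating (R := R) (n := n)).toMultilinearMap.map_sum_finset
    (fun j r => w j r • v r) S).trans (sum_congr rfl fun r _ => ?_)
  rw [MultilinearMap.map_smul_univ, smul_eq_mul, ← det_transpose]
  rfl

end Matrix

namespace FactorialSchur

variable {R : Type*} [CommRing R] {n M : ℕ}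

def facPow (a : ℕ → R) (m : ℕ) (x : R) : R := ∏ k ∈ range m, (x - a k)

theorem facPow_eq_mul_add_mul_sum (a : ℕ → R) (x z : R) {m m' : ℕ} (h : m ≤ m') :
    facPow a m' x = (∏ k ∈ Ico m m', (z - a k)) * facPow a m x +
      (x - z) * ∑ r ∈ Ico m m', (∏ k ∈ Ico (r + 1) m', (z - a k)) * facPow a r x := by
  induction m', h using Nat.le_induction with
  | base => simp
  | succ m' hm ih =>
    have hterm : ∀ r ∈ Ico m m', (∏ k ∈ Ico (r + 1) (m' + 1), (z - a k)) * facPow a r x =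
        (z - a m') * ((∏ k ∈ Ico (r + 1) m', (z - a k)) * facPow a r x) := fun r hr => by
      rw [prod_Ico_succ_top (by simp at hr; omega)]; ring
    rw [prod_Ico_succ_top hm, sum_Ico_succ_top hm, sum_congr rfl hterm, ← mul_sum, Ico_self,
      prod_empty]
    simp only [facPow, prod_range_succ] at ih ⊢
    linear_combination (x - a m') * ih - (x - z) * ih

theorem det_facPow_succ (y : Fin (n + 1) → R) (a : ℕ → R) {m : Fin (n + 1) → ℕ}
    (hm : Antitone m) :
    det (of fun i j => facPow a (m j) (y i)) =
      (∏ i : Fin n, (y 0 - y i.succ)) * facPow a (m (Fin.last n)) (y 0) *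
        ∑ r ∈ Fintype.piFinset fun j : Fin n => Ico (m j.succ) (m j.castSucc),
          (∏ j, ∏ k ∈ Ico (r j + 1) (m j.castSucc), (y 0 - a k)) *
            det (of fun i j => facPow a (r j) (y i.succ)) := by
  let C : Fin (n + 1) → Fin n → R := fun i j =>
    ∑ r ∈ Ico (m j.succ) (m j.castSucc),
      (∏ k ∈ Ico (r + 1) (m j.castSucc), (y 0 - a k)) * facPow a r (y i)
  -- subtracting multiples of each next column clears row `0` except in the last column
  let B : Matrix (Fin (n + 1)) (Fin (n + 1)) R := of fun i =>
    Fin.lastCases (facPow a (m (Fin.last n)) (y i)) fun j => (y i - y 0) * C i j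
  have hBA : det B = det (of fun i j => facPow a (m j) (y i)) :=
    det_eq_of_forall_col_eq_sub_mul_succ (fun j => ∏ k ∈ Ico (m j.succ) (m j.castSucc), (y 0 - a k))
      (fun i => by simp [B]) fun i j => by
        simp only [B, C, of_apply, Fin.lastCases_castSucc]
        rw [facPow_eq_mul_add_mul_sum a (y i) (y 0) (hm (Fin.castSucc_le_succ j))]
        ring
  have hlaplace : det B = (-1) ^ n * facPow a (m (Fin.last n)) (y 0) *
      ((∏ i : Fin n, (y i.succ - y 0)) * det (of fun i j => C i.succ j)) := by
    rw [det_succ_row_zero, Fin.sum_univ_castSucc, ← det_mul_column]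
    simp only [B, of_apply, Fin.lastCases_castSucc, Fin.lastCases_last, sub_self, zero_mul,
      mul_zero, sum_const_zero, zero_add, Fin.val_last, Fin.succAbove_last]
    congr 2
    ext i j
    simp
  have hsign : (-1) ^ n * ∏ i : Fin n, (y i.succ - y 0) = ∏ i : Fin n, (y 0 - y i.succ) := by
    calc (-1) ^ n * ∏ i : Fin n, (y i.succ - y 0) = ∏ i : Fin n, -(y i.succ - y 0) := by
          rw [prod_neg, card_univ, Fintype.card_fin]
      _ = _ := prod_congr rfl fun i _ => neg_sub _ _
  rw [← hBA, hlaplace, det_of_sum_mul, ← hsign]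
  ring

def interlacing (μ : Fin (n + 1) → ℕ) : Finset (Fin n → ℕ) :=
  Fintype.piFinset fun i => Icc (μ i.succ) (μ i.castSucc)

theorem mem_interlacing {μ : Fin (n + 1) → ℕ} {ν : Fin n → ℕ} :
    ν ∈ interlacing μ ↔ ∀ i, μ i.succ ≤ ν i ∧ ν i ≤ μ i.castSucc := by
  simp [interlacing]

theorem antitone_outer_of_mem_interlacing {μ : Fin (n + 1) → ℕ} {ν : Fin n → ℕ}
    (hν : ν ∈ interlacing μ) : Antitone μ :=
  Fin.antitone_iff_succ_le.mpr fun i =>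
    (mem_interlacing.mp hν i).1.trans (mem_interlacing.mp hν i).2

theorem antitone_inner_of_mem_interlacing {μ : Fin (n + 1) → ℕ} {ν : Fin n → ℕ}
    (hν : ν ∈ interlacing μ) : Antitone ν := by
  cases n with
  | zero => exact fun i => i.elim0
  | succ n =>
    refine Fin.antitone_iff_succ_le.mpr fun i => ?_
    have h₁ := (mem_interlacing.mp hν i.succ).2
    have h₂ := (mem_interlacing.mp hν i.castSucc).1
    rw [← Fin.succ_castSucc] at h₁
    exact h₁.trans h₂

/-- The weight of the horizontal strip `μ / ν` filled with the smallest letter. -/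
def stripWeight (z : R) (a : ℕ → R) (μ : Fin (n + 1) → ℕ) (ν : Fin n → ℕ) : R :=
  facPow a (μ (Fin.last n)) z * ∏ i : Fin n, ∏ t ∈ Ico (ν i) (μ i.castSucc), (z - a (t + (n - i)))

theorem det_facPow_staircase_succ (y : Fin (n + 1) → R) (a : ℕ → R) {μ : Fin (n + 1) → ℕ}
    (hμ : Antitone μ) :
    det (of fun i j => facPow a (μ j + (n - j)) (y i)) =
      (∏ i : Fin n, (y 0 - y i.succ)) * ∑ ν ∈ interlacing μ, stripWeight (y 0) a μ ν *
        det (of fun i j : Fin n => facPow a (ν j + (n - 1 - j)) (y i.succ)) := by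
  have hm : Antitone fun j : Fin (n + 1) => μ j + (n - j) := fun i j hij =>
    add_le_add (hμ hij) (Nat.sub_le_sub_left hij n)
  rw [det_facPow_succ y a hm, mul_assoc, mul_sum]
  congr 1
  symm
  refine sum_nbij' (fun ν j => ν j + (n - 1 - j)) (fun r j => r j - (n - 1 - j)) ?_ ?_ ?_ ?_ ?_
  · intro ν hν
    simp only [mem_interlacing, Fintype.mem_piFinset, mem_Ico, Fin.val_succ,
      Fin.val_castSucc] at hν ⊢
    exact fun j => by have := hν j; omega
  · intro r hr
    simp only [mem_interlacing, Fintype.mem_piFinset, mem_Ico, Fin.val_succ,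
      Fin.val_castSucc] at hr ⊢
    exact fun j => by have := hr j; omega
  · intro ν _
    simp
  · intro r hr
    simp only [Fintype.mem_piFinset, mem_Ico, Fin.val_succ, Fin.val_castSucc] at hr
    exact funext fun j => by have := hr j; dsimp only; omega
  · intro ν _
    rw [stripWeight, mul_assoc, Fin.val_last, Nat.sub_self, add_zero]
    congr 2
    refine prod_congr rfl fun j _ => ?_
    rw [prod_Ico_add' (fun k => y 0 - a k)]
    congr 2
    dsimp only
    omega

/-- `T i j` is the `0`-based letter in box `(i, j)`; boxes outside `μ` hold `0`. -/
structure IsReverseTableau (μ : Fin n → ℕ) (T : Fin n → Fin M → Fin n) : Prop where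
  eq_zero_of_not_lt : ∀ i (j : Fin M), ¬ (j : ℕ) < μ i → (T i j : ℕ) = 0
  col_lt : ∀ i i' (j : Fin M), i < i' → (j : ℕ) < μ i' → (T i' j : ℕ) < T i j
  row_le : ∀ i (j j' : Fin M), j ≤ j' → (j' : ℕ) < μ i → (T i j' : ℕ) ≤ T i j

def tableauWeight (y : Fin n → R) (a : ℕ → R) (μ : Fin n → ℕ) (T : Fin n → Fin M → Fin n) : R :=
  ∏ i, ∏ j ∈ univ.filter (fun j : Fin M => (j : ℕ) < μ i),
    (y (T i j) - a (j + n - (i + T i j + 1)))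

open scoped Classical in
noncomputable def tableauSum (M : ℕ) (y : Fin n → R) (a : ℕ → R) (μ : Fin n → ℕ) : R :=
  ∑ T ∈ univ.filter (IsReverseTableau (M := M) μ), tableauWeight y a μ T

def nonzeroShape (T : Fin (n + 1) → Fin M → Fin (n + 1)) : Fin n → ℕ :=
  fun i => #{j | (T i.castSucc j : ℕ) ≠ 0}

def predEntries (T : Fin (n + 1) → Fin M → Fin (n + 1)) : Fin n → Fin M → Fin n :=
  fun i j => ⟨T i.castSucc j - 1, by have := (T i.castSucc j).isLt; have := i.isLt; omega⟩

def succEntries (ν : Fin n → ℕ) (T' : Fin n → Fin M → Fin n) :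
    Fin (n + 1) → Fin M → Fin (n + 1) :=
  Fin.lastCases (fun _ => 0) fun i j => if (j : ℕ) < ν i then (T' i j).succ else 0

@[simp]
theorem succEntries_last (ν : Fin n → ℕ) (T' : Fin n → Fin M → Fin n) (j : Fin M) :
    succEntries ν T' (Fin.last n) j = 0 := by
  simp [succEntries]

@[simp]
theorem succEntries_castSucc (ν : Fin n → ℕ) (T' : Fin n → Fin M → Fin n) (i : Fin n)
    (j : Fin M) :
    succEntries ν T' i.castSucc j = if (j : ℕ) < ν i then (T' i j).succ else 0 := by
  simp [succEntries]

namespace IsReverseTableau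

variable {μ : Fin (n + 1) → ℕ} {T : Fin (n + 1) → Fin M → Fin (n + 1)}

theorem lt_of_ne_zero (hT : IsReverseTableau μ T) {i : Fin (n + 1)} {j : Fin M}
    (h : (T i j : ℕ) ≠ 0) : (j : ℕ) < μ i :=
  not_not.mp fun hj => h (hT.eq_zero_of_not_lt i j hj)

theorem val_add_le (hT : IsReverseTableau μ T) (j : Fin M) (i : Fin (n + 1))
    (hj : (j : ℕ) < μ i) : (T i j : ℕ) + i ≤ n := by
  induction i using Fin.induction with
  | zero => simpa using Fin.is_le (T 0 j)
  | succ i ih =>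
    have hlt := hT.col_lt _ _ j Fin.castSucc_lt_succ hj
    have := ih (hT.lt_of_ne_zero (by omega))
    simp only [Fin.val_succ, Fin.val_castSucc] at this ⊢
    omega

theorem last_eq_zero (hT : IsReverseTableau μ T) (j : Fin M) : (T (Fin.last n) j : ℕ) = 0 := by
  by_cases hj : (j : ℕ) < μ (Fin.last n)
  · simpa using hT.val_add_le j _ hj
  · exact hT.eq_zero_of_not_lt _ j hj

theorem lt_nonzeroShape_iff (hT : IsReverseTableau μ T) (i : Fin n) (j : Fin M) :
    (j : ℕ) < nonzeroShape T i ↔ (T i.castSucc j : ℕ) ≠ 0 :=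
  Fin.val_lt_card_filter_iff (fun j j' hjj' hj' => by
    have := hT.row_le _ j j' hjj' (hT.lt_of_ne_zero hj')
    omega) j

theorem nonzeroShape_mem_interlacing (hT : IsReverseTableau μ T) (hM : ∀ i, μ i ≤ M) :
    nonzeroShape T ∈ interlacing μ := by
  refine mem_interlacing.mpr fun i => ⟨?_, ?_⟩
  · calc μ i.succ = #{j : Fin M | (j : ℕ) < μ i.succ} := by
          rw [Fin.card_filter_val_lt, min_eq_right (hM _)]
      _ ≤ nonzeroShape T i := card_le_card fun j hj => by
          simp only [mem_filter, mem_univ, true_and] at hj ⊢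
          have := hT.col_lt _ _ j Fin.castSucc_lt_succ hj
          omega
  · calc nonzeroShape T i ≤ #{j : Fin M | (j : ℕ) < μ i.castSucc} := card_le_card fun j hj => by
          simp only [mem_filter, mem_univ, true_and] at hj ⊢
          exact hT.lt_of_ne_zero hj
      _ ≤ μ i.castSucc := Fin.card_filter_val_lt.trans_le (min_le_right _ _)

theorem predEntries (hT : IsReverseTableau μ T) :
    IsReverseTableau (nonzeroShape T) (predEntries T) where
  eq_zero_of_not_lt i j hj := by
    have := (hT.lt_nonzeroShape_iff i j).not.mp hj
    simp only [FactorialSchur.predEntries]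
    omega
  col_lt i i' j hii' hj := by
    have hne := (hT.lt_nonzeroShape_iff i' j).mp hj
    have := hT.col_lt _ _ j (Fin.castSucc_lt_castSucc_iff.mpr hii') (hT.lt_of_ne_zero hne)
    simp only [FactorialSchur.predEntries]
    omega
  row_le i j j' hjj' hj' := by
    have hne := (hT.lt_nonzeroShape_iff i j').mp hj'
    have := hT.row_le _ j j' hjj' (hT.lt_of_ne_zero hne)
    simp only [FactorialSchur.predEntries]
    omega

theorem succEntries {ν : Fin n → ℕ} {T' : Fin n → Fin M → Fin n} (hν : ν ∈ interlacing μ)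
    (hT' : IsReverseTableau ν T') : IsReverseTableau μ (succEntries ν T') := by
  have hμ := antitone_outer_of_mem_interlacing hν
  -- a box of `μ` below row `i` lies in `ν`, as `μ (i + 1) ≤ ν i`
  have hlt : ∀ (i : Fin n) (i' : Fin (n + 1)) (j : Fin M), i.castSucc < i' → (j : ℕ) < μ i' →
      (j : ℕ) < ν i := fun i i' j hii' hj =>
    (hj.trans_le (hμ (Fin.castSucc_lt_iff_succ_le.mp hii'))).trans_le (mem_interlacing.mp hν i).1
  refine ⟨fun i j hj => ?_, fun i i' j hii' hj => ?_, fun i j j' hjj' hj' => ?_⟩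
  · induction i using Fin.lastCases with
    | last => simp
    | cast i =>
      have := (mem_interlacing.mp hν i).2
      rw [succEntries_castSucc, if_neg (by omega)]
      rfl
  · induction i using Fin.lastCases with
    | last => exact absurd hii' (not_lt.mpr (Fin.le_last i'))
    | cast i =>
      rw [succEntries_castSucc, if_pos (hlt i i' j hii' hj), Fin.val_succ]
      induction i' using Fin.lastCases with
      | last => simp
      | cast i' =>
        rw [succEntries_castSucc]
        split_ifs with hj'
        · simpa using hT'.col_lt i i' j (Fin.castSucc_lt_castSucc_iff.mp hii') hj'
        · simp
  · induction i using Fin.lastCases with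
    | last => simp
    | cast i =>
      rw [succEntries_castSucc, succEntries_castSucc]
      split_ifs with h₁ h₂
      · simpa using hT'.row_le i j j' hjj' h₁
      · have : (j : ℕ) ≤ j' := hjj'
        omega
      · simp
      · simp

end IsReverseTableau

theorem succEntries_predEntries {μ : Fin (n + 1) → ℕ} {T : Fin (n + 1) → Fin M → Fin (n + 1)}
    (hT : IsReverseTableau μ T) :
    succEntries (nonzeroShape T) (predEntries T) = T := by
  funext i j
  induction i using Fin.lastCases with
  | last =>
    ext
    simp [hT.last_eq_zero j]
  | cast i =>
    have hiff := hT.lt_nonzeroShape_iff i j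
    rw [succEntries_castSucc]
    split_ifs with hj
    · ext
      simp only [Fin.val_succ, predEntries]
      omega
    · ext
      simp only [Fin.val_zero]
      omega

theorem predEntries_succEntries {ν : Fin n → ℕ} {T' : Fin n → Fin M → Fin n}
    (hT' : IsReverseTableau ν T') :
    predEntries (succEntries ν T') = T' := by
  funext i j
  ext
  simp only [predEntries, succEntries_castSucc]
  split_ifs with hj
  · simp
  · simp [hT'.eq_zero_of_not_lt i j hj]

theorem nonzeroShape_succEntries {μ : Fin (n + 1) → ℕ} {ν : Fin n → ℕ} (hν : ν ∈ interlacing μ)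
    (hM : ∀ i, μ i ≤ M) (T' : Fin n → Fin M → Fin n) :
    nonzeroShape (succEntries ν T') = ν := by
  funext i
  have hνM := (mem_interlacing.mp hν i).2.trans (hM _)
  simp only [nonzeroShape, succEntries_castSucc]
  convert (Fin.card_filter_val_lt (n := M) (m := ν i)).trans (min_eq_right hνM) using 3 with j
  split_ifs <;> simp [*]

theorem tableauWeight_succEntries (y : Fin (n + 1) → R) (a : ℕ → R) {μ : Fin (n + 1) → ℕ}
    {ν : Fin n → ℕ} (hν : ν ∈ interlacing μ) (hM : ∀ i, μ i ≤ M) (T' : Fin n → Fin M → Fin n) :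
    tableauWeight y a μ (succEntries ν T') =
      stripWeight (y 0) a μ ν * tableauWeight (fun i => y i.succ) a ν T' := by
  have hlast : ∏ j ∈ univ.filter (fun j : Fin M => (j : ℕ) < μ (Fin.last n)),
      (y (succEntries ν T' (Fin.last n) j) -
        a (j + (n + 1) - (Fin.last n + succEntries ν T' (Fin.last n) j + 1))) =
      facPow a (μ (Fin.last n)) (y 0) := by
    simp_rw [← mem_range]
    rw [facPow, ← Fin.prod_filter_val_mem _ (fun t ht => (mem_range.mp ht).trans_le (hM _))]
    refine prod_congr rfl fun j _ => ?_
    simp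
  have hrow : ∀ i : Fin n, ∏ j ∈ univ.filter (fun j : Fin M => (j : ℕ) < μ i.castSucc),
      (y (succEntries ν T' i.castSucc j) -
        a (j + (n + 1) - (i.castSucc + succEntries ν T' i.castSucc j + 1))) =
      (∏ t ∈ Ico (ν i) (μ i.castSucc), (y 0 - a (t + (n - i)))) *
        ∏ j ∈ univ.filter (fun j : Fin M => (j : ℕ) < ν i),
          (y (T' i j).succ - a (j + n - (i + T' i j + 1))) := by
    intro i
    have hνμ := (mem_interlacing.mp hν i).2
    rw [← prod_filter_mul_prod_filter_not _ (fun j : Fin M => (j : ℕ) < ν i), mul_comm,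
      filter_filter, filter_filter]
    congr 1
    · rw [← Fin.prod_filter_val_mem _ (fun t ht => (mem_Ico.mp ht).2.trans_le (hM _))]
      refine prod_congr (filter_congr fun j _ => by simp [mem_Ico]; omega) fun j hj => ?_
      simp only [mem_filter, mem_univ, true_and, mem_Ico] at hj
      rw [succEntries_castSucc, if_neg (by omega)]
      congr 2
      simp only [Fin.val_zero, Fin.val_castSucc]
      omega
    · refine prod_congr (filter_congr fun j _ => by omega) fun j hj => ?_
      simp only [mem_filter, mem_univ, true_and] at hj
      rw [succEntries_castSucc, if_pos hj]
      congr 2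
      simp only [Fin.val_succ, Fin.val_castSucc]
      omega
  rw [tableauWeight, Fin.prod_univ_castSucc, hlast, prod_congr rfl fun i _ => hrow i,
    prod_mul_distrib, stripWeight, tableauWeight]
  ring

theorem tableauSum_succ (y : Fin (n + 1) → R) (a : ℕ → R) {μ : Fin (n + 1) → ℕ}
    (hM : ∀ i, μ i ≤ M) :
    tableauSum M y a μ =
      ∑ ν ∈ interlacing μ, stripWeight (y 0) a μ ν * tableauSum M (fun i => y i.succ) a ν := by
  classical
  rw [tableauSum, ← sum_fiberwise_of_maps_to (g := nonzeroShape) (t := interlacing μ)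
    fun T hT => (mem_filter.mp hT).2.nonzeroShape_mem_interlacing hM]
  refine sum_congr rfl fun ν hν => ?_
  rw [tableauSum, mul_sum]
  symm
  refine sum_nbij' (succEntries ν) predEntries (fun T' hT' => ?_) (fun T hT => ?_)
    (fun T' hT' => ?_) (fun T hT => ?_) fun T' _ => (tableauWeight_succEntries y a hν hM T').symm
  · simp only [mem_filter, mem_univ, true_and] at hT' ⊢
    exact ⟨hT'.succEntries hν, nonzeroShape_succEntries hν hM T'⟩
  · simp only [mem_filter, mem_univ, true_and] at hT ⊢
    exact hT.2 ▸ hT.1.predEntries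
  · simp only [mem_filter, mem_univ, true_and] at hT'
    exact predEntries_succEntries hT'
  · simp only [mem_filter, mem_univ, true_and] at hT
    exact hT.2 ▸ succEntries_predEntries hT.1

theorem det_facPow_eq_prod_mul_tableauSum (M : ℕ) (y : Fin n → R) (a : ℕ → R)
    {μ : Fin n → ℕ} (hμ : Antitone μ) (hM : ∀ i, μ i ≤ M) :
    det (of fun i j => facPow a (μ j + (n - 1 - j)) (y i)) =
      (∏ i, ∏ j ∈ univ.filter (fun j => i < j), (y i - y j)) * tableauSum M y a μ := by
  induction n with
  | zero =>
    have hT (T : Fin 0 → Fin M → Fin 0) : IsReverseTableau μ T :=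
      ⟨fun i => i.elim0, fun i => i.elim0, fun i => i.elim0⟩
    simp [tableauSum, tableauWeight, hT]
  | succ n ih =>
    have hstep : ∀ ν ∈ interlacing μ,
        det (of fun i j : Fin n => facPow a (ν j + (n - 1 - j)) (y i.succ)) =
          (∏ i : Fin n, ∏ j ∈ univ.filter (fun j => i < j), (y i.succ - y j.succ)) *
            tableauSum M (fun i => y i.succ) a ν := fun ν hν =>
      ih (fun i => y i.succ) (antitone_inner_of_mem_interlacing hν)
        fun i => (mem_interlacing.mp hν i).2.trans (hM _)
    simp only [Nat.add_sub_cancel]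
    rw [det_facPow_staircase_succ y a hμ, sum_congr rfl fun ν hν => by rw [hstep ν hν],
      Fin.prod_prod_filter_lt_sub_succ, tableauSum_succ y a hM, mul_sum, mul_sum]
    exact sum_congr rfl fun ν _ => by ring

end FactorialSchur

open MvPolynomial

-- Letters and indices of `A` are `0`-based: `T i j` is the letter `T i j + 1`, `A k` is `A_{k+1}`.
open scoped Classical in
/-- Combinatorial formula for the factorial Schur polynomial: the determinant
`det[(y_i|A)^{μ_j+n-j}]` equals the Vandermonde times the sum, over all reverse
tableaux `T` of shape `μ` with entries in `{1,…,n}` (encoded as functions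
`Fin n → Fin (μ_1) → Fin n`, value `T i j` encoding the entry `T(i,j) = (T i j)+1`,
normalized to `0` outside the diagram, strictly decreasing down columns and weakly
decreasing along rows), of `Π_{(i,j)∈μ} (y_{T(i,j)} - A_{j-i+n+1-T(i,j)})`
(all indices 1-based; here `A k` encodes `A_{k+1}`). -/
theorem stmt15 (n : ℕ) (hn : 0 < n) (A : ℕ → ℂ) (μ : Fin n → ℕ) (hμ : Antitone μ) :
    Matrix.det (Matrix.of fun i j : Fin n =>
        ∏ k ∈ Finset.range (μ j + (n - 1 - (j : ℕ))), (X i - C (A k)))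
      = (∏ i : Fin n, ∏ j ∈ Finset.univ.filter (fun j : Fin n => i < j), (X i - X j)) *
        ∑ T ∈ (Finset.univ : Finset (Fin n → Fin (μ ⟨0, hn⟩) → Fin n)).filter
          (fun T =>
            (∀ (i : Fin n) (j : Fin (μ ⟨0, hn⟩)), ¬ ((j : ℕ) < μ i) → T i j = ⟨0, hn⟩) ∧
            (∀ (i i' : Fin n) (j : Fin (μ ⟨0, hn⟩)), i < i' → (j : ℕ) < μ i' →
              (T i' j : ℕ) < (T i j : ℕ)) ∧
            (∀ (i : Fin n) (j j' : Fin (μ ⟨0, hn⟩)), j ≤ j' → (j' : ℕ) < μ i →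
              (T i j' : ℕ) ≤ (T i j : ℕ))),
          ∏ i : Fin n, ∏ j ∈ Finset.univ.filter (fun j : Fin (μ ⟨0, hn⟩) => (j : ℕ) < μ i),
            (X (T i j) - C (A (((j : ℕ) + n) - ((i : ℕ) + (T i j : ℕ) + 1)))) := by
  refine (FactorialSchur.det_facPow_eq_prod_mul_tableauSum (μ ⟨0, hn⟩) X (fun k => C (A k)) hμ
    fun i => hμ (Nat.zero_le _)).trans (congrArg _ ?_)
  rw [FactorialSchur.tableauSum]
  refine sum_congr (filter_congr fun T _ => ?_) fun T _ => rfl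
  simp only [Fin.ext_iff]
  exact ⟨fun ⟨h₁, h₂, h₃⟩ => ⟨h₁, h₂, h₃⟩, fun ⟨h₁, h₂, h₃⟩ => ⟨h₁, h₂, h₃⟩⟩
end
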